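/- Assume λ_k < α ≤ β. Then for every v ∈ V₂ there exists a unique u* ∈ V₁ such that J_{α,β}(u* + v) ≥ J_{α,β}(u + v) for every u ∈ V₁; that is, u ↦ J_{α,β}(u+v) achieves a unique maximum on V₁. -/

import Mathlib

/-! Write `J(w) = ½(‖w‖² - α‖Tw‖²) - ½(β - α)‖(Tw)⁻‖²`. The second term is concave because
`f ↦ ‖f⁻‖` is convex on `L²` and `α ≤ β`, while on `V₁` the quadratic part is strongly concave
since `‖u‖² ≤ λ_k ‖Tu‖² < α ‖Tu‖²` for `u ≠ 0`. So `u ↦ J(u + v)` is strongly concave on the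
finite-dimensional space `V₁`; as `v` is orthogonal to `V₁` for both inner products, it is also
bounded by `‖v‖²/2 - c‖u‖²`, hence tends to `-∞` and has exactly one maximiser. -/

open MeasureTheory RealInnerProductSpace Filter Topology

/-- The functional `J_{α,β}(u) = ½(B(u,u) - α∫_Ω (u⁺)² - β∫_Ω (u⁻)²)`, where the Hilbert
space `X₀` carries the Gagliardo-type inner product `B = ⟪·,·⟫` and `T : X₀ → L²(Ω)` is the
embedding into `L²(Ω)`; note `∫_Ω (u⁺)² = ‖(Tu)⁺‖²_{L²}`. -/
noncomputable def Jfun {Ω : Type*} [MeasurableSpace Ω] {μ : Measure Ω}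
    {X₀ : Type*} [NormedAddCommGroup X₀] [InnerProductSpace ℝ X₀]
    (T : X₀ →ₗ[ℝ] Lp ℝ 2 μ) (α β : ℝ) (u : X₀) : ℝ :=
  (⟪u, u⟫ - α * ‖Lp.posPart (T u)‖ ^ 2 - β * ‖Lp.negPart (T u)‖ ^ 2) / 2

open Set

theorem norm_smul_add_smul_sq {F : Type*} [NormedAddCommGroup F] [InnerProductSpace ℝ F]
    {a b : ℝ} (hab : a + b = 1) (x y : F) :
    ‖a • x + b • y‖ ^ 2 = a * ‖x‖ ^ 2 + b * ‖y‖ ^ 2 - a * b * ‖x - y‖ ^ 2 := by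
  rw [norm_add_sq_real, norm_sub_sq_real, norm_smul, norm_smul, real_inner_smul_left,
    real_inner_smul_right, mul_pow, mul_pow, Real.norm_eq_abs, Real.norm_eq_abs, sq_abs, sq_abs]
  obtain rfl := eq_sub_of_add_eq hab
  ring

theorem tendsto_cocompact_atBot_of_le_sub_mul_norm_sq {E : Type*} [NormedAddCommGroup E]
    [ProperSpace E] {f : E → ℝ} {C c : ℝ} (hc : 0 < c) (hf : ∀ x, f x ≤ C - c * ‖x‖ ^ 2) :
    Tendsto f (cocompact E) atBot := by
  have hquad : Tendsto (fun t : ℝ => C - c * t ^ 2) atTop atBot := by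
    simpa only [sub_eq_add_neg, Function.comp_def] using tendsto_atBot_add_const_left _ C
      (tendsto_neg_atTop_atBot.comp ((tendsto_pow_atTop two_ne_zero).const_mul_atTop hc))
  exact tendsto_atBot_mono hf (hquad.comp tendsto_norm_cocompact_atTop)

theorem StrictConcaveOn.existsUnique_forall_le {E : Type*} [NormedAddCommGroup E]
    [NormedSpace ℝ E] [FiniteDimensional ℝ E] {f : E → ℝ} (hf : StrictConcaveOn ℝ univ f)
    (hlim : Tendsto f (cocompact E) atBot) : ∃! x, ∀ y, f y ≤ f x := by
  obtain ⟨x, hx⟩ := hf.concaveOn.locallyLipschitz.continuous.exists_forall_ge hlim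
  exact ⟨x, hx, fun y hy => hf.eq_of_isMaxOn (fun z _ => hy z) (fun z _ => hx z) trivial trivial⟩

namespace MeasureTheory.Lp

variable {A : Type*} [MeasurableSpace A] {μ : Measure A}

theorem posPart_sub_negPart {p : ENNReal} (f : Lp ℝ p μ) : posPart f - negPart f = f := by
  ext1
  filter_upwards [coeFn_posPart f, coeFn_negPart_eq_max f,
    coeFn_sub (posPart f) (negPart f)] with a hpos hneg hsub
  rw [hsub, Pi.sub_apply, hpos, hneg]
  rcases le_total (f a) 0 with h | h
  · rw [max_eq_right h, max_eq_left (by linarith)]; ring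
  · rw [max_eq_left h, max_eq_right (by linarith)]; ring

theorem inner_posPart_negPart (f : Lp ℝ 2 μ) : ⟪posPart f, negPart f⟫ = 0 := by
  rw [L2.inner_def]
  refine integral_eq_zero_of_ae ?_
  filter_upwards [coeFn_posPart f, coeFn_negPart_eq_max f] with a hpos hneg
  rw [hpos, hneg, Pi.zero_apply, RCLike.inner_apply, conj_trivial]
  rcases le_total (f a) 0 with h | h
  · rw [max_eq_right h, mul_zero]
  · rw [max_eq_right (by linarith : -f a ≤ 0), zero_mul]

theorem norm_posPart_sq_add_norm_negPart_sq (f : Lp ℝ 2 μ) :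
    ‖posPart f‖ ^ 2 + ‖negPart f‖ ^ 2 = ‖f‖ ^ 2 := by
  conv_rhs => rw [← posPart_sub_negPart f]
  rw [norm_sub_sq_real, inner_posPart_negPart]
  ring

theorem convexOn_norm_negPart {p : ENNReal} [Fact (1 ≤ p)] :
    ConvexOn ℝ univ fun f : Lp ℝ p μ => ‖negPart f‖ := by
  refine ⟨convex_univ, fun f _ g _ a b ha hb _ => ?_⟩
  calc ‖negPart (a • f + b • g)‖ ≤ ‖a • negPart f + b • negPart g‖ := by
        refine norm_le_norm_of_ae_le ?_
        filter_upwards [coeFn_negPart_eq_max (a • f + b • g), coeFn_add (a • f) (b • g),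
          coeFn_smul a f, coeFn_smul b g, coeFn_add (a • negPart f) (b • negPart g),
          coeFn_smul a (negPart f), coeFn_smul b (negPart g), coeFn_negPart_eq_max f,
          coeFn_negPart_eq_max g] with x h1 h2 h3 h4 h5 h6 h7 h8 h9
        rw [h1, h2, Pi.add_apply, h3, h4, h5, Pi.add_apply, h6, h7, Pi.smul_apply, Pi.smul_apply,
          Pi.smul_apply, Pi.smul_apply, h8, h9, smul_eq_mul, smul_eq_mul, smul_eq_mul, smul_eq_mul,
          Real.norm_of_nonneg (le_max_right _ _), Real.norm_of_nonneg (by positivity)]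
        refine max_le ?_ (by positivity)
        nlinarith [le_max_left (-f x) 0, le_max_left (-g x) 0]
    _ ≤ a • ‖negPart f‖ + b • ‖negPart g‖ := by
        refine (norm_add_le _ _).trans_eq ?_
        rw [norm_smul, norm_smul, Real.norm_of_nonneg ha, Real.norm_of_nonneg hb]
        rfl

end MeasureTheory.Lp

section Jfun

variable {A : Type*} [MeasurableSpace A] {μ : Measure A}
  {X : Type*} [NormedAddCommGroup X] [InnerProductSpace ℝ X] (T : X →ₗ[ℝ] Lp ℝ 2 μ) {α β : ℝ}

theorem Jfun_eq (w : X) :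
    Jfun T α β w = (‖w‖ ^ 2 - α * ‖T w‖ ^ 2 - (β - α) * ‖Lp.negPart (T w)‖ ^ 2) / 2 := by
  rw [Jfun, real_inner_self_eq_norm_sq, ← Lp.norm_posPart_sq_add_norm_negPart_sq (T w)]
  ring

theorem Jfun_le (hαβ : α ≤ β) (w : X) : Jfun T α β w ≤ (‖w‖ ^ 2 - α * ‖T w‖ ^ 2) / 2 := by
  rw [Jfun_eq]
  have hneg : 0 ≤ (β - α) * ‖Lp.negPart (T w)‖ ^ 2 := mul_nonneg (by linarith) (sq_nonneg _)
  linarith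

theorem le_Jfun_smul_add_smul (hαβ : α ≤ β) {a b : ℝ} (ha : 0 ≤ a) (hb : 0 ≤ b) (hab : a + b = 1)
    (x y : X) :
    a * Jfun T α β x + b * Jfun T α β y + a * b * (α * ‖T (x - y)‖ ^ 2 - ‖x - y‖ ^ 2) / 2
      ≤ Jfun T α β (a • x + b • y) := by
  have hneg : ‖Lp.negPart (a • T x + b • T y)‖ ^ 2
      ≤ a * ‖Lp.negPart (T x)‖ ^ 2 + b * ‖Lp.negPart (T y)‖ ^ 2 := by
    simpa only [Pi.pow_apply, smul_eq_mul] using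
      (Lp.convexOn_norm_negPart.pow (fun _ _ => norm_nonneg _) 2).2 (mem_univ (T x))
        (mem_univ (T y)) ha hb hab
  have hβα : 0 ≤ β - α := by linarith
  rw [Jfun_eq, Jfun_eq, Jfun_eq, norm_smul_add_smul_sq hab, map_add, map_smul, map_smul,
    norm_smul_add_smul_sq hab, map_sub]
  linarith [mul_le_mul_of_nonneg_left hneg hβα]

theorem Jfun_add_le_of_inner_eq_zero (hα : 0 ≤ α) (hαβ : α ≤ β) {u v : X} (huv : ⟪u, v⟫ = 0)
    (hTuv : ⟪T u, T v⟫ = 0) :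
    Jfun T α β (u + v) ≤ (‖u‖ ^ 2 - α * ‖T u‖ ^ 2 + ‖v‖ ^ 2) / 2 := by
  have hJ := Jfun_le T hαβ (u + v)
  rw [map_add, norm_add_sq_real, norm_add_sq_real, huv, hTuv] at hJ
  nlinarith [mul_nonneg hα (sq_nonneg ‖T v‖)]

theorem strongConcaveOn_Jfun_add (V : Submodule ℝ X) (v : X) (hαβ : α ≤ β) {m : ℝ}
    (hm : ∀ u ∈ V, m * ‖u‖ ^ 2 ≤ α * ‖T u‖ ^ 2 - ‖u‖ ^ 2) :
    StrongConcaveOn univ m fun u : V => Jfun T α β (u + v) := by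
  refine ⟨convex_univ, fun x _ y _ a b ha hb hab => ?_⟩
  have hcomb : a • ((x : X) + v) + b • ((y : X) + v) = ((a • x + b • y : V) : X) + v := by
    rw [Submodule.coe_add, Submodule.coe_smul, Submodule.coe_smul]
    linear_combination (norm := module) hab • v
  have hdiff : ((x : X) + v) - ((y : X) + v) = ((x - y : V) : X) := by
    rw [Submodule.coe_sub]; abel
  have hJ := le_Jfun_smul_add_smul T hαβ ha hb hab (x + v) (y + v)
  rw [hcomb, hdiff] at hJ
  have hgap := mul_le_mul_of_nonneg_left (hm _ (x - y).2) (mul_nonneg ha hb)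
  simp only [smul_eq_mul, Submodule.coe_norm] at hgap ⊢
  nlinarith

end Jfun

theorem stmt_2_general
    {n : ℕ}
    {Ωs : Set (EuclideanSpace ℝ (Fin n))}
    {X₀ : Type*} [NormedAddCommGroup X₀] [InnerProductSpace ℝ X₀]
    (T : X₀ →ₗ[ℝ] Lp ℝ 2 (volume.restrict Ωs))
    {lk : ℝ} (hlk0 : 0 < lk)
    (V₁ V₂ : Submodule ℝ X₀) [FiniteDimensional ℝ V₁]
    (hV₂ : ∀ v : X₀, v ∈ V₂ ↔ ∀ u ∈ V₁, ⟪u, v⟫ = 0 ∧ ⟪T u, T v⟫ = 0)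
    (hV₁b : ∀ u ∈ V₁, ⟪u, u⟫ ≤ lk * ‖T u‖ ^ 2)
    {α β : ℝ} (hA : lk < α) (hAB : α ≤ β)
    :
    ∀ v : V₂, ∃! u' : V₁, ∀ u : V₁,
      Jfun T α β ((u : X₀) + (v : X₀)) ≤ Jfun T α β ((u' : X₀) + (v : X₀)) := by
  intro v
  have hδ : 0 < α / lk - 1 := sub_pos.2 ((one_lt_div hlk0).2 hA)
  have hgap : ∀ u ∈ V₁, (α / lk - 1) * ‖u‖ ^ 2 ≤ α * ‖T u‖ ^ 2 - ‖u‖ ^ 2 := by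
    intro u hu
    have hu' := hV₁b u hu
    rw [real_inner_self_eq_norm_sq] at hu'
    have hαu : α / lk * ‖u‖ ^ 2 ≤ α * ‖T u‖ ^ 2 := calc
      α / lk * ‖u‖ ^ 2 ≤ α / lk * (lk * ‖T u‖ ^ 2) := by gcongr; linarith
      _ = α * ‖T u‖ ^ 2 := by field_simp
    linarith
  have hbound : ∀ u : V₁,
      Jfun T α β ((u : X₀) + (v : X₀)) ≤ ‖(v : X₀)‖ ^ 2 / 2 - (α / lk - 1) / 2 * ‖u‖ ^ 2 := by
    intro u
    obtain ⟨huv, hTuv⟩ := (hV₂ v).1 v.2 u u.2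
    have hJ := Jfun_add_le_of_inner_eq_zero T (hlk0.trans hA).le hAB huv hTuv
    have hu := hgap u u.2
    rw [Submodule.coe_norm]
    linarith
  exact ((strongConcaveOn_Jfun_add T V₁ v hAB hgap).strictConcaveOn hδ).existsUnique_forall_le
    (tendsto_cocompact_atBot_of_le_sub_mul_norm_sq (half_pos hδ) hbound)

theorem stmt_2
    {n : ℕ} {s : ℝ} (hs0 : 0 < s) (hs1 : s < 1) (hns : 2 * s < (n : ℝ))
    {Ωs : Set (EuclideanSpace ℝ (Fin n))} (hΩb : Bornology.IsBounded Ωs)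
    (hΩm : MeasurableSet Ωs)
    {K : EuclideanSpace ℝ (Fin n) → ℝ} (hKpos : ∀ x, x ≠ 0 → 0 < K x)
    (hK1 : Integrable (fun x => min (‖x‖ ^ 2) 1 * K x))
    (hK2 : ∃ lam > 0, ∀ x, x ≠ 0 → lam * ‖x‖ ^ (-((n : ℝ) + 2 * s)) ≤ K x)
    (hK3 : ∀ x, K (-x) = K x)
    {X₀ : Type*} [NormedAddCommGroup X₀] [InnerProductSpace ℝ X₀] [CompleteSpace X₀]
    (T : X₀ →ₗ[ℝ] Lp ℝ 2 (volume.restrict Ωs)) (hT : Function.Injective T)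
    {lk lk1 : ℝ} (hlk0 : 0 < lk) (hlk : lk < lk1)
    (V₁ V₂ : Submodule ℝ X₀) [FiniteDimensional ℝ V₁]
    (hV₂ : ∀ v : X₀, v ∈ V₂ ↔ ∀ u ∈ V₁, ⟪u, v⟫ = 0 ∧ ⟪T u, T v⟫ = 0)
    (hcompl : IsCompl V₁ V₂)
    (hV₁b : ∀ u ∈ V₁, ⟪u, u⟫ ≤ lk * ‖T u‖ ^ 2)
    (hV₂b : ∀ v ∈ V₂, lk1 * ‖T v‖ ^ 2 ≤ ⟪v, v⟫)
    {α β : ℝ} (hA : lk < α) (hAB : α ≤ β)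
    :
    ∀ v : V₂, ∃! u' : V₁, ∀ u : V₁,
      Jfun T α β ((u : X₀) + (v : X₀)) ≤ Jfun T α β ((u' : X₀) + (v : X₀)) :=
  stmt_2_general T hlk0 V₁ V₂ hV₂ hV₁b hA hAB
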